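/- The Kuratowski-style pairing on monadic nested types is correct: for the NRC expressions Pair(x₁,x₂) := {{↑x₁}, {↑x₁, ↑x₂}} (where ↑ is an iterated singleton embedding ur_n → ur_m, m = max(n₁,n₂)), and the NRC[get] projection expressions π̂₁, π̂₂ defined via case analysis on whether the encoded pair is a singleton or two-element set, one has π̂₁(Pair(a₁,a₂)) = a₁ and π̂₂(Pair(a₁,a₂)) = a₂ for all objects a₁ of type ur_{n₁} and a₂ of type ur_{n₂}. -/

import Mathlib

/-- Monadic nested types over a set `U` of Ur-elements: `Mon U 0 = U`,
`Mon U (n+1) = Set (Mon U n)`. -/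
def Mon (U : Type) : ℕ → Type
  | 0 => U
  | n + 1 => Set (Mon U n)

instance MonInhabited (U : Type) [Inhabited U] : ∀ n, Inhabited (Mon U n)
  | 0 => ⟨(default : U)⟩
  | _ + 1 => ⟨(∅ : Set _)⟩

/-- The `k`-fold singleton embedding `Mon U n → Mon U (n+k)`. -/
def upIter {U : Type} {n : ℕ} : ∀ k : ℕ, Mon U n → Mon U (n + k)
  | 0, x => x
  | k + 1, x => ({upIter k x} : Set (Mon U (n + k)))

/-- The iterated singleton embedding `↑ : Mon U n → Mon U m` for `n ≤ m`. -/
def upTo {U : Type} {n m : ℕ} (h : n ≤ m) (x : Mon U n) : Mon U m :=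
  cast (congrArg (Mon U) (Nat.add_sub_cancel' h)) (upIter (m - n) x)

open Classical

/-- `get`: extract the unique element of a singleton, defaulting otherwise. -/

noncomputable def getM {U : Type} [Inhabited U] {k : ℕ} (s : Mon U (k + 1)) : Mon U k :=
  if h : ∃ x : Mon U k, s = ({x} : Set (Mon U k)) then h.choose else default

/-- `k`-fold downcasting `Mon U (n+k) → Mon U n` via iterated `get`. -/
noncomputable def downIter {U : Type} [Inhabited U] {n : ℕ} : ∀ k : ℕ, Mon U (n + k) → Mon U n
  | 0, x => x
  | k + 1, x => downIter k (getM x)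

/-- The iterated downcasting `↓ : Mon U m → Mon U n` for `n ≤ m`. -/
noncomputable def downTo {U : Type} [Inhabited U] {n m : ℕ} (h : n ≤ m) (x : Mon U m) :
    Mon U n :=
  downIter (m - n) (cast (congrArg (Mon U) (Nat.add_sub_cancel' h).symm) x)

/-- Kuratowski-style pairing on monadic types:
`Pair(a₁,a₂) = {{↑a₁}, {↑a₁, ↑a₂}} : Mon U (max n₁ n₂ + 2)`. -/
def KPair {U : Type} {n₁ n₂ : ℕ} (a₁ : Mon U n₁) (a₂ : Mon U n₂) :
    Mon U (max n₁ n₂ + 2) :=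
  ({({upTo (le_max_left n₁ n₂) a₁} : Set (Mon U (max n₁ n₂))),
    ({upTo (le_max_left n₁ n₂) a₁, upTo (le_max_right n₁ n₂) a₂} : Set (Mon U (max n₁ n₂)))} :
    Set (Set (Mon U (max n₁ n₂))))

/-- A set-typed monadic object, seen as a set. -/
def Mon.asSet {U : Type} {k : ℕ} (s : Mon U (k + 1)) : Set (Mon U k) := s

/-- The first projection `π̂₁` of an encoded pair, defined by case analysis on whether the
encoding contains two distinct elements: intersect the members of `p` and downcast,
otherwise just downcast `p` itself. -/
noncomputable def proj1 {U : Type} [Inhabited U] {n₁ m : ℕ} (h : n₁ ≤ m)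
    (p : Mon U (m + 2)) : Mon U n₁ :=
  if ∃ x ∈ Mon.asSet p, ∃ y ∈ Mon.asSet p, x ≠ y then
    downTo (Nat.le_succ_of_le h) (show Mon U (m + 1) from ⋂₀ Mon.asSet p)
  else
    downTo (by omega) p

/-- The second projection `π̂₂` of an encoded pair: when `p` has two distinct elements,
remove the singleton `{↑a₁}` from `p`, then remove `↑a₁` from the remaining two-element
set and downcast; otherwise just downcast `p`. -/
noncomputable def proj2 {U : Type} [Inhabited U] {n₁ n₂ m : ℕ} (h1 : n₁ ≤ m) (h2 : n₂ ≤ m)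
    (p : Mon U (m + 2)) : Mon U n₂ :=
  if ∃ x ∈ Mon.asSet p, ∃ y ∈ Mon.asSet p, x ≠ y then
    let a1up : Mon U m := upTo h1 (proj1 h1 p)
    let S2 : Mon U (m + 1) := getM ((Mon.asSet p \ {({a1up} : Set (Mon U m))} : Set (Set (Mon U m))))
    downTo h2 (getM ((Mon.asSet S2 \ {a1up} : Set (Mon U m))))
  else
    downTo (by omega) p

/-!
After lifting both components to the common level `m`, the encoding is the Kuratowski pair
`{{u₁}, {u₁, u₂}}` of `u₁ u₂ : ur_m`. Its members always intersect to `{u₁}`; when `u₁ ≠ u₂`,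
removing `{u₁}` and then `u₁` leaves `{u₂}`, and when `u₁ = u₂` the encoding collapses to the
double singleton `{{u₁}}`, which the fallback branch simply downcasts back to `u₁ = u₂`. In every
case the result is `↓ (↑ aᵢ) = aᵢ`, because `get` inverts the singleton map.
-/

lemma getM_singleton {U : Type} [Inhabited U] {k : ℕ} (x : Mon U k) :
    getM ({x} : Set (Mon U k)) = x := by
  have h : ∃ y : Mon U k, ({x} : Set (Mon U k)) = {y} := ⟨x, rfl⟩
  exact (dif_pos h).trans (Set.singleton_eq_singleton_iff.mp h.choose_spec).symm

lemma getM_eq_of_asSet_eq_singleton {U : Type} [Inhabited U] {k : ℕ} {s : Mon U (k + 1)}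
    {x : Mon U k} (h : Mon.asSet s = {x}) : getM s = x :=
  (congrArg getM h).trans (getM_singleton x)

lemma downIter_upIter {U : Type} [Inhabited U] {n : ℕ} :
    ∀ (k : ℕ) (x : Mon U n), downIter k (upIter k x) = x
  | 0, _ => rfl
  | k + 1, x => (congrArg (downIter k) (getM_singleton (upIter k x))).trans (downIter_upIter k x)

lemma upTo_eq_upIter {U : Type} {n k : ℕ} (h : n ≤ n + k) (x : Mon U n) :
    upTo h x = upIter k x := by
  rw [upTo, cast_eq_iff_heq]
  congr 1
  omega

lemma downTo_eq_downIter {U : Type} [Inhabited U] {n k : ℕ} (h : n ≤ n + k)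
    (x : Mon U (n + k)) : downTo h x = downIter k x := by
  rw [downTo]
  congr 1
  · omega
  · exact cast_heq _ _

lemma downTo_upTo {U : Type} [Inhabited U] {n m : ℕ} (h : n ≤ m) (x : Mon U n) :
    downTo h (upTo h x) = x := by
  obtain ⟨k, rfl⟩ := Nat.exists_eq_add_of_le h
  rw [upTo_eq_upIter, downTo_eq_downIter, downIter_upIter]

lemma downTo_singleton {U : Type} [Inhabited U] {n m : ℕ} (h : n ≤ m) (h' : n ≤ m + 1)
    (x : Mon U m) : downTo h' (({x} : Set (Mon U m)) : Mon U (m + 1)) = downTo h x := by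
  obtain ⟨k, rfl⟩ := Nat.exists_eq_add_of_le h
  refine (downTo_eq_downIter (k := k + 1) h' _).trans ?_
  rw [downTo_eq_downIter h]
  exact congrArg (downIter k) (getM_singleton x)

def kuratowski {U : Type} {m : ℕ} (u₁ u₂ : Mon U m) : Mon U (m + 2) :=
  ({{u₁}, {u₁, u₂}} : Set (Set (Mon U m)))

section kuratowski

variable {U : Type} {m : ℕ}

lemma KPair_eq_kuratowski {n₁ n₂ : ℕ} (a₁ : Mon U n₁) (a₂ : Mon U n₂) :
    KPair a₁ a₂ = kuratowski (upTo (le_max_left n₁ n₂) a₁) (upTo (le_max_right n₁ n₂) a₂) :=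
  rfl

lemma singleton_ne_pair {u₁ u₂ : Mon U m} (hne : u₁ ≠ u₂) : ({u₁} : Set (Mon U m)) ≠ {u₁, u₂} :=
  fun h => hne (Set.mem_singleton_iff.mp (h ▸ Set.mem_insert_of_mem u₁ rfl)).symm

lemma exists_ne_mem_kuratowski_iff (u₁ u₂ : Mon U m) :
    (∃ x ∈ Mon.asSet (kuratowski u₁ u₂), ∃ y ∈ Mon.asSet (kuratowski u₁ u₂), x ≠ y) ↔
      u₁ ≠ u₂ := by
  constructor
  · rintro ⟨x, hx, y, hy, hxy⟩ rfl
    simp only [Mon.asSet, kuratowski, Set.pair_eq_singleton] at hx hy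
    exact hxy (hx.trans hy.symm)
  · intro hne
    exact ⟨({u₁} : Set (Mon U m)), Or.inl rfl, ({u₁, u₂} : Set (Mon U m)), Or.inr rfl,
      singleton_ne_pair hne⟩

lemma sInter_kuratowski (u₁ u₂ : Mon U m) :
    ⋂₀ Mon.asSet (kuratowski u₁ u₂) = {u₁} := by
  simp only [Mon.asSet, kuratowski, Set.sInter_pair]
  exact Set.inter_eq_left.mpr (Set.singleton_subset_iff.mpr (Set.mem_insert u₁ {u₂}))

variable [Inhabited U]

lemma getM_sdiff_kuratowski {u₁ u₂ : Mon U m} (hne : u₁ ≠ u₂) :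
    getM (k := m + 1)
        ((Mon.asSet (kuratowski u₁ u₂) \ {({u₁} : Set (Mon U m))} : Set (Set (Mon U m)))) =
      (({u₁, u₂} : Set (Mon U m)) : Mon U (m + 1)) :=
  getM_eq_of_asSet_eq_singleton (Set.pair_sdiff_left (singleton_ne_pair hne))

lemma getM_pair_sdiff_left {u₁ u₂ : Mon U m} (hne : u₁ ≠ u₂) :
    getM ((Mon.asSet (({u₁, u₂} : Set (Mon U m)) : Mon U (m + 1)) \ {u₁} : Set (Mon U m))) = u₂ :=
  getM_eq_of_asSet_eq_singleton (Set.pair_sdiff_left hne)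

lemma downTo_kuratowski_self {n : ℕ} (h : n ≤ m) (h' : n ≤ m + 2) (u : Mon U m) :
    downTo h' (kuratowski u u) = downTo h u := calc
  downTo h' (kuratowski u u) = downTo h' (({{u}} : Set (Set (Mon U m))) : Mon U (m + 2)) := by
    simp only [kuratowski, Set.pair_eq_singleton]
  _ = downTo (Nat.le_succ_of_le h) (({u} : Set (Mon U m)) : Mon U (m + 1)) :=
    downTo_singleton _ _ _
  _ = downTo h u := downTo_singleton _ _ _

lemma proj1_kuratowski {n₁ : ℕ} (h : n₁ ≤ m) (u₁ u₂ : Mon U m) :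
    proj1 h (kuratowski u₁ u₂) = downTo h u₁ := by
  unfold proj1
  split_ifs with hpair
  · rw [sInter_kuratowski]
    exact downTo_singleton h _ u₁
  · obtain rfl : u₁ = u₂ := not_ne_iff.mp ((exists_ne_mem_kuratowski_iff u₁ u₂).not.mp hpair)
    exact downTo_kuratowski_self h _ u₁

lemma proj2_kuratowski_upTo {n₁ n₂ : ℕ} (h₁ : n₁ ≤ m) (h₂ : n₂ ≤ m) (a₁ : Mon U n₁)
    (u₂ : Mon U m) : proj2 h₁ h₂ (kuratowski (upTo h₁ a₁) u₂) = downTo h₂ u₂ := by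
  unfold proj2
  split_ifs with hpair
  · have hne := (exists_ne_mem_kuratowski_iff _ u₂).mp hpair
    dsimp only
    rw [proj1_kuratowski, downTo_upTo, getM_sdiff_kuratowski hne, getM_pair_sdiff_left hne]
  · obtain rfl : upTo h₁ a₁ = u₂ :=
      not_ne_iff.mp ((exists_ne_mem_kuratowski_iff _ u₂).not.mp hpair)
    exact downTo_kuratowski_self h₂ _ _

end kuratowski

/-- **Correctness of the Kuratowski-style pairing on monadic nested types**
(Proposition B.2): for all objects `a₁ : ur_{n₁}` and `a₂ : ur_{n₂}`,
`π̂₁(Pair(a₁,a₂)) = a₁` and `π̂₂(Pair(a₁,a₂)) = a₂`. -/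
theorem kuratowski_projections_correct {U : Type} [Inhabited U] {n₁ n₂ : ℕ}
    (a₁ : Mon U n₁) (a₂ : Mon U n₂) :
    proj1 (le_max_left n₁ n₂) (KPair a₁ a₂) = a₁ ∧
    proj2 (le_max_left n₁ n₂) (le_max_right n₁ n₂) (KPair a₁ a₂) = a₂ := by
  rw [KPair_eq_kuratowski, proj1_kuratowski, proj2_kuratowski_upTo, downTo_upTo, downTo_upTo]
  exact ⟨rfl, rfl⟩
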